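/- Let (K, φ) be a topological dynamical system with discrete spectrum, q : K → L a projection onto its maximal trivial factor, and s : L → K a continuous section of q (i.e., q ∘ s = id_L). Then the map Φ : E(K, φ) × L → K, (ψ, l) ↦ ψ(s(l)), is a continuous surjection satisfying q(Φ(ψ, l)) = l and Φ(φ ∘ ψ, l) = φ(Φ(ψ, l)) for all ψ, l; moreover Φ(ψ, l) = Φ(ψ', l') holds if and only if l = l' and ψ agrees with ψ' on the fiber K_l. Consequently (K, L, q; φ) is isomorphic to its Ellis group bundle, the quotient of E(K, φ) × L by this relation. -/

import Mathlib

/-- A topological dynamical system has discrete spectrum if the linear span of the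
eigenvectors of its Koopman operator with unimodular eigenvalues is dense in `C(K)`. -/
def DiscreteSpectrum {K : Type*} [TopologicalSpace K] (φ : K → K) : Prop :=
  Dense (↑(Submodule.span ℂ
    {f : C(K, ℂ) | f ≠ 0 ∧ ∃ lam : ℂ, ‖lam‖ = 1 ∧ ∀ x, f (φ x) = lam * f x}) :
      Set C(K, ℂ))

/-- The Ellis semigroup of a topological dynamical system: the closure of `{φ^n : n ∈ ℕ}` in
`K → K` with the product (pointwise-convergence) topology. -/
def Ellis {K : Type*} [TopologicalSpace K] (φ : K → K) : Set (K → K) :=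
  closure {ψ : K → K | ∃ n : ℕ, ψ = φ^[n]}

/-!
On a unimodular eigenfunction `f` every `ψ ∈ E(K, φ)` acts by a unimodular scalar, since
`f (ψ x) * f y = f (ψ y) * f x` and `‖f ∘ ψ‖ = ‖f‖` are closed conditions satisfied by all `φ^[n]`.
Hence `(ψ, x) ↦ f (ψ x)` is jointly continuous, and by density of the eigenfunctions so is
`(ψ, x) ↦ ψ x`. Thus `E` is a compact semigroup of continuous maps whose only idempotent is `id`;
by Ellis–Numakura `id` is a limit of the `φ^[n + 1]`, so `φ ∘ E = E`.

Two elements of `E` that agree at one point of a fibre agree on it, because `‖f‖` is invariant,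
hence constant on fibres. For surjectivity onto the fibre of `y`, fix finitely many eigenfunctions
`fᵢ`: the function `z ↦ min_{ψ ∈ E} ∑ ‖fᵢ z - fᵢ (ψ y)‖` is continuous and, as `φ ∘ E = E`,
invariant, so it vanishes on the whole fibre of `y`; compactness of `E` does the rest.
-/

open Function Set

theorem isClosed_setOf_continuous_comp {X K β : Type*} [TopologicalSpace X] [TopologicalSpace K]
    [CompactSpace K] [UniformSpace β] (F : X → K) :
    IsClosed {f : C(K, β) | Continuous (f ∘ F)} :=
  isClosed_of_closure_subset fun _ hf =>
    ((ContinuousMap.tendsto_iff_tendstoUniformly.mp Filter.tendsto_id).comp F).continuous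
      (mem_closure_iff_frequently.mp hf)

theorem continuous_of_forall_continuous_comp {X Y : Type*} [TopologicalSpace X]
    [TopologicalSpace Y] [CompletelyRegularSpace Y] {F : X → Y}
    (h : ∀ f : C(Y, ℂ), Continuous (f ∘ F)) : Continuous F := by
  refine continuous_def.2 fun U hU => isOpen_iff_forall_mem_open.2 fun x hx => ?_
  obtain ⟨g, hg, hgx, hgU⟩ := CompletelyRegularSpace.completely_regular_isOpen (F x) U hU hx
  let f : C(Y, ℂ) := ⟨fun y => ((g y : ℝ) : ℂ), by fun_prop⟩
  refine ⟨(f ∘ F) ⁻¹' {1}ᶜ, fun x' hx' => ?_, isClosed_singleton.isOpen_compl.preimage (h f), ?_⟩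
  · by_contra hU'
    exact hx' (by simp [f, hgU hU'])
  · simp [f, hgx]

section CompositionClosure

variable {K : Type*} [TopologicalSpace K]

theorem comp_mem_closure {S : Set (K → K)} (hS : ∀ a ∈ S, ∀ b ∈ S, a ∘ b ∈ S)
    {a b : K → K} (ha : a ∈ closure S) (hb : b ∈ closure S) (hac : Continuous a) :
    a ∘ b ∈ closure S := by
  have hright (c : K → K) (hc : c ∈ S) : a ∘ c ∈ closure S := by
    have hcont : Continuous fun χ : K → K => χ ∘ c := continuous_pi fun x => continuous_apply (c x)
    exact closure_mono (image_subset_iff.2 fun χ hχ => hS χ hχ c hc)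
      (image_closure_subset_closure_image hcont ⟨a, ha, rfl⟩)
  have hcont : Continuous fun χ : K → K => a ∘ χ :=
    continuous_pi fun x => hac.comp (continuous_apply x)
  exact closure_minimal (by rintro _ ⟨c, hc, rfl⟩; exact hright c hc) isClosed_closure
    (image_closure_subset_closure_image hcont ⟨b, hb, rfl⟩)

theorem exists_idempotent_of_isCompact [T2Space K] {T : Set (K → K)} (hT : IsCompact T)
    (hne : T.Nonempty) (hcomp : ∀ a ∈ T, ∀ b ∈ T, a ∘ b ∈ T) : ∃ u ∈ T, u ∘ u = u := by
  let _ : TopologicalSpace (Function.End K) := Pi.topologicalSpace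
  have : T2Space (Function.End K) := inferInstanceAs (T2Space (K → K))
  exact exists_idempotent_in_compact_subsemigroup (M := Function.End K)
    (fun r => continuous_pi fun x => continuous_apply (r x)) T hne hT hcomp

end CompositionClosure

section Ellis

variable {K : Type*} [TopologicalSpace K] {φ : K → K}

theorem Ellis.iterate_mem (φ : K → K) (n : ℕ) : φ^[n] ∈ Ellis φ :=
  subset_closure ⟨n, rfl⟩

theorem Ellis.subset_of_isClosed {S : Set (K → K)} (hS : IsClosed S) (h : ∀ n, φ^[n] ∈ S) :
    Ellis φ ⊆ S :=
  closure_minimal (by rintro _ ⟨n, rfl⟩; exact h n) hS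

theorem Ellis.isCompact [CompactSpace K] (φ : K → K) : IsCompact (Ellis φ) :=
  isClosed_closure.isCompact

theorem Ellis.map_apply_of_invariant {L : Type*} [TopologicalSpace L] [T2Space L] {q : K → L}
    (hq : Continuous q) (hinv : ∀ x, q (φ x) = q x) {ψ : K → K} (hψ : ψ ∈ Ellis φ) (x : K) :
    q (ψ x) = q x := by
  have hiter (n : ℕ) : q (φ^[n] x) = q x := by
    induction n with
    | zero => rfl
    | succ n ih => rw [iterate_succ_apply', hinv, ih]
  exact Ellis.subset_of_isClosed (S := {χ | q (χ x) = q x})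
    (isClosed_eq (hq.comp (continuous_apply x)) continuous_const) hiter hψ

theorem Ellis.apply_mul_apply_of_eigen {R : Type*} [CommMonoid R] [TopologicalSpace R]
    [ContinuousMul R] [T2Space R] {f : K → R} (hf : Continuous f) {c : R}
    (hfc : ∀ x, f (φ x) = c * f x) {ψ : K → K} (hψ : ψ ∈ Ellis φ) (x y : K) :
    f (ψ x) * f y = f (ψ y) * f x := by
  have hiter (n : ℕ) (z : K) : f (φ^[n] z) = c ^ n * f z := by
    rw [(Semiconj.iterate_right (f := f) (fun z => hfc z) n) z, mul_left_iterate]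
  refine Ellis.subset_of_isClosed (S := {χ | f (χ x) * f y = f (χ y) * f x}) ?_ ?_ hψ
  · exact isClosed_eq ((hf.comp (continuous_apply x)).mul continuous_const)
      ((hf.comp (continuous_apply y)).mul continuous_const)
  · intro n
    show f (φ^[n] x) * f y = f (φ^[n] y) * f x
    rw [hiter, hiter]
    ac_rfl

theorem Ellis.norm_apply_of_eigen {R : Type*} [SeminormedRing R] [NormMulClass R] {f : K → R}
    (hf : Continuous f) {c : R} (hc : ‖c‖ = 1) (hfc : ∀ x, f (φ x) = c * f x) {ψ : K → K}
    (hψ : ψ ∈ Ellis φ) (x : K) : ‖f (ψ x)‖ = ‖f x‖ :=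
  Ellis.map_apply_of_invariant (q := fun z => ‖f z‖) hf.norm
    (fun z => by rw [hfc, norm_mul, hc, one_mul]) hψ x

end Ellis

def unimodularEigenfunctions {K : Type*} [TopologicalSpace K] (φ : K → K) : Set C(K, ℂ) :=
  {f | f ≠ 0 ∧ ∃ lam : ℂ, ‖lam‖ = 1 ∧ ∀ x, f (φ x) = lam * f x}

def InvariantsFactorThrough {K L : Type*} [TopologicalSpace K] (φ : K → K) (q : K → L) :
    Prop :=
  ∀ f : C(K, ℂ), (∀ x, f (φ x) = f x) → ∃ g : L → ℂ, ∀ x, f x = g (q x)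

theorem InvariantsFactorThrough.eq_of_map_eq {K L : Type*} [TopologicalSpace K] {φ : K → K}
    {q : K → L} (hfactor : InvariantsFactorThrough φ q) {h : K → ℝ} (hh : Continuous h)
    (hinv : ∀ z, h (φ z) = h z) {x y : K} (hxy : q x = q y) : h x = h y := by
  obtain ⟨g, hg⟩ := hfactor ⟨fun z => (h z : ℂ), by fun_prop⟩ fun z => by simp [hinv]
  have hxy' : (h x : ℂ) = h y := (hg x).trans (hxy ▸ (hg y).symm)
  exact_mod_cast hxy'

namespace DiscreteSpectrum

variable {K : Type*} [TopologicalSpace K] {φ : K → K}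

theorem forall_mem_of_isClosed (hds : DiscreteSpectrum φ) {p : Submodule ℂ C(K, ℂ)}
    (hp : IsClosed (p : Set C(K, ℂ))) (hsub : unimodularEigenfunctions φ ⊆ p) (f : C(K, ℂ)) :
    f ∈ p :=
  closure_minimal (Submodule.span_le.2 hsub) hp (hds.closure_eq ▸ mem_univ f)

variable [CompactSpace K] [T2Space K]

theorem eq_of_forall_eigenfunction (hds : DiscreteSpectrum φ) {x y : K}
    (h : ∀ f ∈ unimodularEigenfunctions φ, f x = f y) : x = y := by
  let δ : C(K, ℂ) →L[ℂ] ℂ := ContinuousMap.evalCLM ℂ x - ContinuousMap.evalCLM ℂ y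
  have hall (f : C(K, ℂ)) : f x = f y :=
    sub_eq_zero.1 (hds.forall_mem_of_isClosed (p := (δ : C(K, ℂ) →ₗ[ℂ] ℂ).ker) δ.isClosed_ker
      (fun f hf => sub_eq_zero.2 (h f hf)) f)
  by_contra hxy
  obtain ⟨g, hg, hgxy⟩ := separatesPoints_continuous_of_t35Space hxy
  have := hall ⟨fun z => (g z : ℂ), Complex.continuous_ofReal.comp hg⟩
  exact hgxy (by simpa using this)

theorem continuous_eval (hds : DiscreteSpectrum φ) :
    Continuous fun p : Ellis φ × K => (p.1 : K → K) p.2 := by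
  refine continuous_of_forall_continuous_comp fun f => ?_
  let p : Submodule ℂ C(K, ℂ) :=
    { carrier := {g | Continuous (g ∘ fun p : Ellis φ × K => (p.1 : K → K) p.2)}
      add_mem' := fun ha hb => ha.add hb
      zero_mem' := continuous_const
      smul_mem' := fun c _ hg => hg.const_smul c }
  refine hds.forall_mem_of_isClosed (p := p) (isClosed_setOf_continuous_comp _) ?_ f
  rintro g ⟨hg0, lam, -, hg⟩
  obtain ⟨x₀, hx₀⟩ := DFunLike.ne_iff.1 hg0
  have hx₀' : g x₀ ≠ 0 := hx₀
  have key : (g ∘ fun p : Ellis φ × K => (p.1 : K → K) p.2) =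
      fun p => g ((p.1 : K → K) x₀) * g p.2 / g x₀ := by
    funext p
    rw [eq_div_iff hx₀']
    exact Ellis.apply_mul_apply_of_eigen g.continuous hg p.1.2 p.2 x₀
  show Continuous _
  rw [key]
  exact ((g.continuous.comp ((continuous_apply x₀).comp (continuous_subtype_val.comp
    continuous_fst))).mul (g.continuous.comp continuous_snd)).div_const _

theorem continuous_of_mem_ellis (hds : DiscreteSpectrum φ) {ψ : K → K} (hψ : ψ ∈ Ellis φ) :
    Continuous ψ :=
  hds.continuous_eval.comp (continuous_const (y := (⟨ψ, hψ⟩ : Ellis φ)).prodMk continuous_id)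

protected theorem continuous (hds : DiscreteSpectrum φ) : Continuous φ :=
  hds.continuous_of_mem_ellis (Ellis.iterate_mem φ 1)

theorem comp_mem_ellis (hds : DiscreteSpectrum φ) {ψ θ : K → K} (hψ : ψ ∈ Ellis φ)
    (hθ : θ ∈ Ellis φ) : ψ ∘ θ ∈ Ellis φ :=
  comp_mem_closure (by rintro _ ⟨m, rfl⟩ _ ⟨n, rfl⟩; exact ⟨m + n, (iterate_add φ m n).symm⟩)
    hψ hθ (hds.continuous_of_mem_ellis hψ)

theorem eq_id_of_idempotent (hds : DiscreteSpectrum φ) {u : K → K} (hu : u ∈ Ellis φ)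
    (huu : u ∘ u = u) : u = id := by
  funext x
  refine hds.eq_of_forall_eigenfunction fun f ⟨_, lam, hlam, hf⟩ => ?_
  show f (u x) = f x
  have hmul := Ellis.apply_mul_apply_of_eigen f.continuous hf hu (u x) x
  rw [show u (u x) = u x from congrFun huu x] at hmul
  rcases eq_or_ne (f (u x)) 0 with h0 | h0
  · have hnorm := Ellis.norm_apply_of_eigen f.continuous hlam hf hu x
    rw [h0, norm_zero, eq_comm, norm_eq_zero] at hnorm
    rw [h0, hnorm]
  · exact (mul_left_cancel₀ h0 hmul).symm

theorem id_mem_closure_iterate_succ (hds : DiscreteSpectrum φ) :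
    id ∈ closure {χ : K → K | ∃ n, χ = φ^[n + 1]} := by
  set T := closure {χ : K → K | ∃ n, χ = φ^[n + 1]}
  have hTE : T ⊆ Ellis φ := closure_mono (by rintro _ ⟨n, rfl⟩; exact ⟨n + 1, rfl⟩)
  have hcomp : ∀ a ∈ T, ∀ b ∈ T, a ∘ b ∈ T := fun a ha b hb =>
    comp_mem_closure (by
        rintro _ ⟨m, rfl⟩ _ ⟨n, rfl⟩
        exact ⟨m + n + 1, by rw [← iterate_add]; congr 1; omega⟩)
      ha hb (hds.continuous_of_mem_ellis (hTE ha))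
  obtain ⟨u, huT, huu⟩ := exists_idempotent_of_isCompact isClosed_closure.isCompact
    ⟨φ, subset_closure (show φ ∈ {χ : K → K | ∃ n, χ = φ^[n + 1]} from ⟨0, rfl⟩)⟩ hcomp
  exact hds.eq_id_of_idempotent (hTE huT) huu ▸ huT

theorem image_comp_left_ellis (hds : DiscreteSpectrum φ) : (φ ∘ ·) '' Ellis φ = Ellis φ := by
  refine Subset.antisymm ?_ ?_
  · rintro _ ⟨ψ, hψ, rfl⟩
    exact hds.comp_mem_ellis (Ellis.iterate_mem φ 1) hψ
  have hclosed : IsClosed ((φ ∘ ·) '' Ellis φ) :=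
    ((Ellis.isCompact φ).image
      (continuous_pi fun x => hds.continuous.comp (continuous_apply x))).isClosed
  have hsucc (n : ℕ) : φ^[n + 1] ∈ (φ ∘ ·) '' Ellis φ :=
    ⟨φ^[n], Ellis.iterate_mem φ n, (iterate_succ' φ n).symm⟩
  refine Ellis.subset_of_isClosed hclosed fun n => ?_
  rcases n with _ | n
  · exact closure_minimal (by rintro _ ⟨n, rfl⟩; exact hsucc n) hclosed
      hds.id_mem_closure_iterate_succ
  · exact hsucc n

section MaximalTrivialFactor

variable {L : Type*} {q : K → L}

theorem apply_eq_of_apply_eq (hds : DiscreteSpectrum φ) (hfactor : InvariantsFactorThrough φ q)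
    {ψ ψ' : K → K} (hψ : ψ ∈ Ellis φ) (hψ' : ψ' ∈ Ellis φ) {x y : K} (hxy : q x = q y)
    (h : ψ y = ψ' y) : ψ x = ψ' x := by
  refine hds.eq_of_forall_eigenfunction fun f ⟨_, lam, hlam, hf⟩ => ?_
  rcases eq_or_ne (f y) 0 with hy | hy
  · have hx : ‖f x‖ = 0 := by
      rw [hfactor.eq_of_map_eq (h := fun z => ‖f z‖) f.continuous.norm
        (fun z => by rw [hf, norm_mul, hlam, one_mul]) hxy, hy, norm_zero]
    rw [norm_eq_zero.1 ((Ellis.norm_apply_of_eigen f.continuous hlam hf hψ x).trans hx),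
      norm_eq_zero.1 ((Ellis.norm_apply_of_eigen f.continuous hlam hf hψ' x).trans hx)]
  · refine mul_right_cancel₀ hy ?_
    rw [Ellis.apply_mul_apply_of_eigen f.continuous hf hψ x y, h,
      Ellis.apply_mul_apply_of_eigen f.continuous hf hψ' y x]

theorem exists_mem_ellis_forall_apply_eq (hds : DiscreteSpectrum φ)
    (hfactor : InvariantsFactorThrough φ q) {x y : K} (hxy : q y = q x)
    (u : Finset (unimodularEigenfunctions φ)) :
    ∃ ψ ∈ Ellis φ, ∀ f ∈ u, (f : C(K, ℂ)) (ψ y) = (f : C(K, ℂ)) x := by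
  choose lam hlam hf using fun f : unimodularEigenfunctions φ => f.2.2
  let G : K → (K → K) → ℝ := fun z χ => ∑ f ∈ u, ‖(f : C(K, ℂ)) z - (f : C(K, ℂ)) (χ y)‖
  have hG : Continuous ↿G := continuous_finsetSum _ fun f _ =>
    (((f : C(K, ℂ)).continuous.comp continuous_fst).sub
      ((f : C(K, ℂ)).continuous.comp ((continuous_apply y).comp continuous_snd))).norm
  have hGφ (z : K) (χ : K → K) : G (φ z) (φ ∘ χ) = G z χ :=
    Finset.sum_congr rfl fun f _ => by
      simp only [comp_apply, hf, ← mul_sub, norm_mul, hlam, one_mul]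
  let d : K → ℝ := fun z => sInf (G z '' Ellis φ)
  have hd_inv (z : K) : d (φ z) = d z := by
    show sInf _ = sInf _
    congr 1
    calc G (φ z) '' Ellis φ = G (φ z) '' ((φ ∘ ·) '' Ellis φ) := by rw [hds.image_comp_left_ellis]
      _ = G z '' Ellis φ := by rw [image_image]; simp_rw [hGφ]
  have hd_y : d y = 0 := IsLeast.csInf_eq
    ⟨⟨id, Ellis.iterate_mem φ 0, by simp [G]⟩, by rintro _ ⟨χ, -, rfl⟩; positivity⟩
  have hd_x : d x = 0 := hd_y ▸
    (hfactor.eq_of_map_eq ((Ellis.isCompact φ).continuous_sInf hG) hd_inv hxy).symm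
  obtain ⟨ψ, hψ, hψx⟩ := ((Ellis.isCompact φ).image (hG.comp (Continuous.prodMk_right x))).sInf_mem
    ((nonempty_of_mem (Ellis.iterate_mem φ 0)).image _)
  refine ⟨ψ, hψ, fun f hfu => (sub_eq_zero.1 (norm_eq_zero.1 ?_)).symm⟩
  exact (Finset.sum_eq_zero_iff_of_nonneg (fun _ _ => norm_nonneg _)).1 (hψx.trans hd_x) f hfu

theorem exists_mem_ellis_apply_eq (hds : DiscreteSpectrum φ)
    (hfactor : InvariantsFactorThrough φ q) {x y : K} (hxy : q y = q x) :
    ∃ ψ ∈ Ellis φ, ψ y = x := by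
  obtain ⟨ψ, hψ, hψx⟩ := (Ellis.isCompact φ).inter_iInter_nonempty
    (fun f : unimodularEigenfunctions φ => {χ | (f : C(K, ℂ)) (χ y) = (f : C(K, ℂ)) x})
    (fun f => isClosed_eq ((f : C(K, ℂ)).continuous.comp (continuous_apply y)) continuous_const)
    fun u => by
      obtain ⟨ψ, hψ, h⟩ := hds.exists_mem_ellis_forall_apply_eq hfactor hxy u
      exact ⟨ψ, hψ, mem_iInter₂.2 h⟩
  exact ⟨ψ, hψ, hds.eq_of_forall_eigenfunction fun f hf => mem_iInter.1 hψx ⟨f, hf⟩⟩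

end MaximalTrivialFactor

end DiscreteSpectrum

theorem isomorphic_to_ellis_group_bundle_general
    {K L : Type*} [TopologicalSpace K] [CompactSpace K] [T2Space K]
    [TopologicalSpace L] [T2Space L]
    (φ : K → K) (hds : DiscreteSpectrum φ)
    (q : K → L) (hq : Continuous q)
    (hinv : ∀ x, q (φ x) = q x)
    (hmax : ∀ f : C(K, ℂ), (∀ x, f (φ x) = f x) ↔ ∃ g : C(L, ℂ), f = g.comp ⟨q, hq⟩)
    (s : L → K) (hs : Continuous s) (hsec : ∀ l, q (s l) = l) :
    Continuous (fun z : ↥(Ellis φ) × L => (↑z.1 : K → K) (s z.2)) ∧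
    Function.Surjective (fun z : ↥(Ellis φ) × L => (↑z.1 : K → K) (s z.2)) ∧
    (∀ (ψ : ↥(Ellis φ)) (l : L), q ((↑ψ : K → K) (s l)) = l) ∧
    (∀ (ψ ψ' : ↥(Ellis φ)) (l : L), (↑ψ' : K → K) = φ ∘ (↑ψ : K → K) →
      (↑ψ' : K → K) (s l) = φ ((↑ψ : K → K) (s l))) ∧
    (∀ (ψ ψ' : ↥(Ellis φ)) (l l' : L),
      (↑ψ : K → K) (s l) = (↑ψ' : K → K) (s l') ↔
        l = l' ∧ Set.EqOn (↑ψ : K → K) (↑ψ' : K → K) (q ⁻¹' {l})) := by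
  have hfactor : InvariantsFactorThrough φ q := fun f hf =>
    let ⟨g, hg⟩ := (hmax f).1 hf
    ⟨g, fun x => DFunLike.congr_fun hg x⟩
  have hfiber (ψ : Ellis φ) (l : L) : q ((ψ : K → K) (s l)) = l := by
    rw [Ellis.map_apply_of_invariant hq hinv ψ.2, hsec]
  refine ⟨hds.continuous_eval.comp (continuous_fst.prodMk (hs.comp continuous_snd)),
    fun x => ?_, hfiber, fun ψ ψ' l h => by rw [h, comp_apply], fun ψ ψ' l l' => ⟨fun h => ?_, ?_⟩⟩
  · obtain ⟨ψ, hψ, hψx⟩ := hds.exists_mem_ellis_apply_eq hfactor (hsec (q x))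
    exact ⟨(⟨ψ, hψ⟩, q x), hψx⟩
  · obtain rfl : l = l' := by rw [← hfiber ψ l, h, hfiber]
    exact ⟨rfl, fun x hx => hds.apply_eq_of_apply_eq hfactor ψ.2 ψ'.2 (hx.trans (hsec l).symm) h⟩
  · rintro ⟨rfl, heq⟩
    exact heq (hsec l)

/-- Let `(K, φ)` be a topological dynamical system with discrete spectrum,
`q : K → L` a projection onto its maximal trivial factor and `s : L → K` a continuous section
of `q`.  Then `Φ : E(K, φ) × L → K`, `(ψ, l) ↦ ψ (s l)`, is a continuous surjection with
`q (Φ (ψ, l)) = l` and `Φ (φ ∘ ψ, l) = φ (Φ (ψ, l))`, and `Φ (ψ, l) = Φ (ψ', l')` holds iff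
`l = l'` and `ψ = ψ'` on the fiber `K_l`.  Consequently `(K, L, q; φ)` is isomorphic to its
Ellis group bundle, the quotient of `E(K, φ) × L` by this relation. -/
theorem isomorphic_to_ellis_group_bundle
    {K L : Type*} [TopologicalSpace K] [CompactSpace K] [T2Space K]
    [TopologicalSpace L] [CompactSpace L] [T2Space L]
    (φ : K → K) (hφ : Continuous φ) (hds : DiscreteSpectrum φ)
    (q : K → L) (hq : Continuous q) (hqsurj : Function.Surjective q)
    (hinv : ∀ x, q (φ x) = q x)
    (hmax : ∀ f : C(K, ℂ), (∀ x, f (φ x) = f x) ↔ ∃ g : C(L, ℂ), f = g.comp ⟨q, hq⟩)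
    (s : L → K) (hs : Continuous s) (hsec : ∀ l, q (s l) = l) :
    Continuous (fun z : ↥(Ellis φ) × L => (↑z.1 : K → K) (s z.2)) ∧
    Function.Surjective (fun z : ↥(Ellis φ) × L => (↑z.1 : K → K) (s z.2)) ∧
    (∀ (ψ : ↥(Ellis φ)) (l : L), q ((↑ψ : K → K) (s l)) = l) ∧
    (∀ (ψ ψ' : ↥(Ellis φ)) (l : L), (↑ψ' : K → K) = φ ∘ (↑ψ : K → K) →
      (↑ψ' : K → K) (s l) = φ ((↑ψ : K → K) (s l))) ∧
    (∀ (ψ ψ' : ↥(Ellis φ)) (l l' : L),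
      (↑ψ : K → K) (s l) = (↑ψ' : K → K) (s l') ↔
        l = l' ∧ Set.EqOn (↑ψ : K → K) (↑ψ' : K → K) (q ⁻¹' {l})) :=
  isomorphic_to_ellis_group_bundle_general φ hds q hq hinv hmax s hs hsec
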